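/- Let 𝒜 be a compact metric space, N ≥ 1, and for each i ∈ {1,…,N} let Jⁱ : 𝒜^N → ℝ be continuous. Suppose (α^k)_{k ≥ 0} is a sequence in 𝒜^N such that for every k and every i, the i-th coordinate α^{i,k+1} minimizes β ↦ Jⁱ(β, α^{−i,k}) over 𝒜 (best response to the others' previous strategies), and suppose α^k converges to some α^∞ ∈ 𝒜^N. Then α^∞ is a Nash equilibrium: for every i and every β ∈ 𝒜, Jⁱ(α^∞) ≤ Jⁱ(β, α^{−i,∞}). -/

import Mathlib

open Filter Function Topology

theorem le_update_of_tendsto_of_eventually_le {α ι X R : Type*} [DecidableEq ι]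
    [TopologicalSpace X] [TopologicalSpace R] [Preorder R] [OrderClosedTopology R]
    {l : Filter α} [l.NeBot] {J : (ι → X) → R} (hJ : Continuous J)
    {a : α → ι → X} {a' : ι → X} (ha : Tendsto a l (𝓝 a'))
    {i : ι} {b : α → X} {b' : X} (hb : Tendsto b l (𝓝 b')) (β : X)
    (hbr : ∀ᶠ k in l, J (update (a k) i (b k)) ≤ J (update (a k) i β)) :
    J (update a' i b') ≤ J (update a' i β) :=
  le_of_tendsto_of_tendsto ((hJ.tendsto _).comp (ha.update i hb))
    ((hJ.tendsto _).comp (ha.update i tendsto_const_nhds)) hbr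

theorem stmt17_general {𝒜 : Type*} [MetricSpace 𝒜]
    (N : ℕ)
    (J : Fin N → (Fin N → 𝒜) → ℝ) (hJ : ∀ i, Continuous (J i))
    (αseq : ℕ → Fin N → 𝒜)
    (hbr : ∀ k (i : Fin N) (β : 𝒜),
      J i (Function.update (αseq k) i (αseq (k + 1) i))
        ≤ J i (Function.update (αseq k) i β))
    (αlim : Fin N → 𝒜) (hlim : Tendsto αseq atTop (nhds αlim)) :
    ∀ (i : Fin N) (β : 𝒜), J i αlim ≤ J i (Function.update αlim i β) := by
  intro i β
  have hnext : Tendsto (fun k => αseq (k + 1) i) atTop (𝓝 (αlim i)) :=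
    (hlim.comp (tendsto_add_atTop_nat 1)).apply_nhds i
  simpa only [update_eq_self] using le_update_of_tendsto_of_eventually_le (hJ i) hlim hnext β
    (Eventually.of_forall fun k => hbr k i β)

/-- Stability of fictitious play: if the sequence of simultaneous best responses converges,
then (by continuity of the cost functionals) the limit is a Nash equilibrium of the
N-player game. -/
theorem stmt17 {𝒜 : Type*} [MetricSpace 𝒜] [CompactSpace 𝒜]
    (N : ℕ) (hN : 1 ≤ N)
    (J : Fin N → (Fin N → 𝒜) → ℝ) (hJ : ∀ i, Continuous (J i))
    (αseq : ℕ → Fin N → 𝒜)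
    (hbr : ∀ k (i : Fin N) (β : 𝒜),
      J i (Function.update (αseq k) i (αseq (k + 1) i))
        ≤ J i (Function.update (αseq k) i β))
    (αlim : Fin N → 𝒜) (hlim : Tendsto αseq atTop (nhds αlim)) :
    ∀ (i : Fin N) (β : 𝒜), J i αlim ≤ J i (Function.update αlim i β) :=
  stmt17_general N J hJ αseq hbr αlim hlim
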